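/- Interval constancy is preserved under the Shannon recursion for ≥ constraints: let a_1,…,a_n be integers and l_1,…,l_n literals over variables x_1,…,x_n, and for an assignment σ of x_2,…,x_n let s(σ) = Σ_{i=2}^n a_i σ(l_i). Suppose the set {σ : s(σ) ≥ k} is the same for all integers k in the interval [α_f, β_f], and is the same for all integers k in the interval [α_t, β_t]. Then the set {τ : Σ_{i=1}^n a_i τ(l_i) ≥ k} of satisfying assignments of the full constraint is the same for all integers k in the intersection [α_f, β_f] ∩ [α_t + a_1, β_t + a_1]. -/
import Mathlib


/- A literal over Boolean variables is a pair `(x, p) : V × Bool`: the variable `x`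
if `p = true`, and its negation `x̄` if `p = false`.  Under an assignment
`τ : V → Bool`, a positive literal `x` takes value `τ(x)` and a negative literal
`x̄` takes value `1 − τ(x)` (as integers `0`/`1`).  For integers, `[α, β]`
denotes the interval `{k : α ≤ k ≤ β}` and `[α + a, β + a]` the shifted
interval. -/

/-- The integer value (`0` or `1`) of a literal under an assignment. -/
def litVal {V : Type} (τ : V → Bool) (l : V × Bool) : ℤ :=
  if l.2 then (if τ l.1 then 1 else 0) else (if τ l.1 then 0 else 1)

/-- Interval constancy is preserved under the Shannon recursion for `≥`
constraints: writing `s(σ) = Σ_{i=2}^n a_i σ(l_i)` for the tail sum, if the set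
`{σ : s(σ) ≥ k}` is the same for all `k ∈ [α_f, β_f]` and the same for all
`k ∈ [α_t, β_t]`, then the set `{τ : Σ_{i=1}^n a_i τ(l_i) ≥ k}` of satisfying
assignments of the full constraint is the same for all
`k ∈ [α_f, β_f] ∩ [α_t + a₁, β_t + a₁]`. -/
theorem interval_constancy {V : Type} (n : ℕ) (a : Fin (n + 1) → ℤ)
    (l : Fin (n + 1) → V × Bool) (αf βf αt βt : ℤ)
    (hf : ∀ k k' : ℤ, αf ≤ k → k ≤ βf → αf ≤ k' → k' ≤ βf →
      {σ : V → Bool | k ≤ ∑ i : Fin n, a i.succ * litVal σ (l i.succ)}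
        = {σ : V → Bool | k' ≤ ∑ i : Fin n, a i.succ * litVal σ (l i.succ)})
    (ht : ∀ k k' : ℤ, αt ≤ k → k ≤ βt → αt ≤ k' → k' ≤ βt →
      {σ : V → Bool | k ≤ ∑ i : Fin n, a i.succ * litVal σ (l i.succ)}
        = {σ : V → Bool | k' ≤ ∑ i : Fin n, a i.succ * litVal σ (l i.succ)}) :
    ∀ k k' : ℤ,
      αf ≤ k → k ≤ βf → αt + a 0 ≤ k → k ≤ βt + a 0 →
      αf ≤ k' → k' ≤ βf → αt + a 0 ≤ k' → k' ≤ βt + a 0 →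
      {τ : V → Bool | k ≤ ∑ i, a i * litVal τ (l i)}
        = {τ : V → Bool | k' ≤ ∑ i, a i * litVal τ (l i)} := by
  intro k k' h1 h2 h3 h4 h5 h6 h7 h8
  ext τ
  simp only [Set.mem_setOf_eq, Fin.sum_univ_succ]
  have hv : litVal τ (l 0) = 0 ∨ litVal τ (l 0) = 1 := by
    unfold litVal; split <;> split <;> simp
  rcases hv with hv | hv
  · rw [hv, mul_zero, zero_add]
    have := Set.ext_iff.mp (hf k k' h1 h2 h5 h6) τ
    simpa using this
  · rw [hv, mul_one]
    have := Set.ext_iff.mp (ht (k - a 0) (k' - a 0) (by omega) (by omega)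
      (by omega) (by omega)) τ
    simp only [Set.mem_setOf_eq] at this
    omega
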